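/- arXiv:2412.09523 — 3 statements merged into one kernel-verified Lean document; each statement's English description precedes it below -/
import Mathlib

section
/- Given naturals n₁, n₂, m₁, m₂, there exists a multi-index v = (v₁₁, v₁₂, v₂₁, v₂₂) ∈ ℕ⁴ with v₁₁ + v₁₂ + v₂₁ + v₂₂ = π(n₁+n₂, m₁+m₂) and v₁₁ ≤ π(n₁,m₁), v₁₂ ≤ π(n₁,m₂), v₂₁ ≤ π(n₂,m₁), v₂₂ ≤ π(n₂,m₂). -/
/-- The Cantor pairing function. -/
def cpair (t s : ℕ) : ℕ := (t + s) * (t + s + 1) / 2 + s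

lemma cpair_two (t s : ℕ) : 2 * cpair t s = (t + s) * (t + s + 1) + 2 * s := by
  have h : 2 ∣ (t + s) * (t + s + 1) := (Nat.even_mul_succ_self (t + s)).two_dvd
  unfold cpair
  omega

lemma cpair_key (n₁ n₂ m₁ m₂ : ℕ) :
    cpair (n₁ + n₂) (m₁ + m₂) ≤ cpair n₁ m₁ + cpair n₁ m₂ + cpair n₂ m₁ + cpair n₂ m₂ := by
  have h1 := cpair_two (n₁ + n₂) (m₁ + m₂)
  have h2 := cpair_two n₁ m₁
  have h3 := cpair_two n₁ m₂
  have h4 := cpair_two n₂ m₁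
  have h5 := cpair_two n₂ m₂
  have H : 2 * cpair (n₁ + n₂) (m₁ + m₂) ≤
      2 * (cpair n₁ m₁ + cpair n₁ m₂ + cpair n₂ m₁ + cpair n₂ m₂) := by
    rw [h1]
    have : 2 * (cpair n₁ m₁ + cpair n₁ m₂ + cpair n₂ m₁ + cpair n₂ m₂) =
        ((n₁ + m₁) * (n₁ + m₁ + 1) + 2 * m₁) + ((n₁ + m₂) * (n₁ + m₂ + 1) + 2 * m₂) +
        ((n₂ + m₁) * (n₂ + m₁ + 1) + 2 * m₁) + ((n₂ + m₂) * (n₂ + m₂ + 1) + 2 * m₂) := by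
      omega
    rw [this]
    zify
    nlinarith [sq_nonneg ((m₁ : ℤ) - m₂), sq_nonneg ((n₁ : ℤ) - n₂)]
  omega

theorem exists_multiindex_product (n₁ n₂ m₁ m₂ : ℕ) :
    ∃ v₁₁ v₁₂ v₂₁ v₂₂ : ℕ,
      v₁₁ + v₁₂ + v₂₁ + v₂₂ = cpair (n₁ + n₂) (m₁ + m₂) ∧
      v₁₁ ≤ cpair n₁ m₁ ∧ v₁₂ ≤ cpair n₁ m₂ ∧ v₂₁ ≤ cpair n₂ m₁ ∧ v₂₂ ≤ cpair n₂ m₂ := by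
  have h := cpair_key n₁ n₂ m₁ m₂
  set N := cpair (n₁ + n₂) (m₁ + m₂) with hN
  set a := cpair n₁ m₁
  set b := cpair n₁ m₂
  set c := cpair n₂ m₁
  set d := cpair n₂ m₂
  refine ⟨min N a, min (N - min N a) b, min (N - min N a - min (N - min N a) b) c,
    N - min N a - min (N - min N a) b - min (N - min N a - min (N - min N a) b) c,
    by omega, by omega, by omega, by omega, by omega⟩
end

section
/- Let μ₁,…,μ_r be bivariate measures and n a multi-index. There exist unique bivariate Type I polynomials A_{n,1},…,A_{n,r} (with π(mdeg(A_{n,j})) ≤ n_j − 1 and satisfying Σ_j ⟨A_{n,j}, x^t y^s⟩_j = 0 for 0 ≤ π(t,s) ≤ |n|−2 and = 1 for π(t,s) = |n|−1) if and only if there exists a unique monic bivariate Type II polynomial P_n (with π(mdeg(P_n)) = |n| and ⟨P_n, x^t y^s⟩_j = 0 for 0 ≤ π(t,s) ≤ n_j − 1), and both are equivalent to invertibility of the moment matrix M_n. -/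
open MeasureTheory MvPolynomial

/-- The inverse of the Cantor pairing function. -/
def cunpair (N : ℕ) : ℕ × ℕ :=
  let d := (Nat.sqrt (8 * N + 1) - 1) / 2
  let k := N - d * (d + 1) / 2
  (d - k, k)

/-- The exponent vector of the bivariate monomial `x^a.1 * y^a.2`. -/
noncomputable def expv (a : ℕ × ℕ) : Fin 2 →₀ ℕ :=
  Finsupp.single 0 a.1 + Finsupp.single 1 a.2

/-- The position of an exponent vector in the graded reverse lexicographic order. -/
def mpos (s : Fin 2 →₀ ℕ) : ℕ := cpair (s 0) (s 1)

/-- Evaluation of a bivariate polynomial at a point of `ℝ × ℝ`. -/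
noncomputable def ev (P : MvPolynomial (Fin 2) ℝ) (p : ℝ × ℝ) : ℝ :=
  MvPolynomial.eval ![p.1, p.2] P

/-- `P` is the monic bivariate Type II multiple orthogonal polynomial for the multi-index `n`
and the system of bivariate measures `μ`: its leading monomial sits at position `|n|` in the
graded reverse lexicographic order (it is monic there, all other monomials come earlier) and
`⟨P, x^t y^s⟩_j = 0` for all `0 ≤ π(t,s) ≤ n_j − 1`. -/
def IsTypeIIMeas {r : ℕ} (μ : Fin r → Measure (ℝ × ℝ)) (n : Fin r → ℕ)
    (P : MvPolynomial (Fin 2) ℝ) : Prop :=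
  P.coeff (expv (cunpair (∑ j, n j))) = 1 ∧
  (∀ a ∈ P.support, mpos a ≤ ∑ j, n j) ∧
  ∀ j : Fin r, ∀ t s : ℕ, cpair t s < n j →
    ∫ p : ℝ × ℝ, ev P p * (p.1 ^ t * p.2 ^ s) ∂(μ j) = 0

/-- The moment `m^{(j)}_{(t,s)} = ∫ x^t y^s dμ_j` of a bivariate measure. -/
noncomputable def mom (μ : Measure (ℝ × ℝ)) (a : ℕ × ℕ) : ℝ :=
  ∫ p : ℝ × ℝ, p.1 ^ a.1 * p.2 ^ a.2 ∂μ

/-- `A` is the vector of bivariate Type I multiple orthogonal polynomials for the multi-index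
`n` and the system of bivariate measures `μ`: `π(mdeg A_j) ≤ n_j − 1` and
`Σ_j ⟨A_j, x^t y^s⟩_j` equals `0` for `0 ≤ π(t,s) ≤ |n|−2` and `1` for `π(t,s) = |n|−1`. -/
def IsTypeIMeas {r : ℕ} (μ : Fin r → Measure (ℝ × ℝ)) (n : Fin r → ℕ)
    (A : Fin r → MvPolynomial (Fin 2) ℝ) : Prop :=
  (∀ j : Fin r, ∀ a ∈ (A j).support, mpos a < n j) ∧
  (∀ t s : ℕ, cpair t s + 2 ≤ ∑ j, n j →
    ∑ j : Fin r, ∫ p : ℝ × ℝ, ev (A j) p * (p.1 ^ t * p.2 ^ s) ∂(μ j) = 0) ∧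
  (∀ t s : ℕ, cpair t s + 1 = ∑ j, n j →
    ∑ j : Fin r, ∫ p : ℝ × ℝ, ev (A j) p * (p.1 ^ t * p.2 ^ s) ∂(μ j) = 1)

/-! ### Auxiliary lemmas on the Cantor pairing -/

lemma cunpair_cpair (t s : ℕ) : cunpair (cpair t s) = (t, s) := by
  obtain ⟨m, hm⟩ := Nat.even_mul_succ_self (t + s)
  have hc : cpair t s = m + s := by unfold cpair; omega
  have h1 : 2 * (t + s) + 1 ≤ Nat.sqrt (8 * cpair t s + 1) := by
    rw [hc, Nat.le_sqrt]; nlinarith [hm]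
  have h2' : Nat.sqrt (8 * cpair t s + 1) < 2 * (t + s) + 3 := by
    rw [Nat.sqrt_lt, hc]; nlinarith [hm]
  have hdq : (Nat.sqrt (8 * cpair t s + 1) - 1) / 2 = t + s := by omega
  simp only [cunpair, hdq, Prod.mk.injEq]
  unfold cpair
  omega

lemma cpair_cunpair (N : ℕ) : cpair (cunpair N).1 (cunpair N).2 = N := by
  set q := Nat.sqrt (8 * N + 1) with hq
  have hq1 : q * q ≤ 8 * N + 1 := by
    have := Nat.sqrt_le' (8 * N + 1); rwa [pow_two] at this
  have hq2 : 8 * N + 1 < (q + 1) * (q + 1) := by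
    have := Nat.lt_succ_sqrt' (8 * N + 1); rwa [Nat.succ_eq_add_one, pow_two] at this
  have hqpos : 1 ≤ q := by rw [hq, Nat.le_sqrt]; omega
  set d := (q - 1) / 2 with hdd
  have hb1 : 2 * d + 1 ≤ q := by omega
  have hb2 : q ≤ 2 * d + 2 := by omega
  obtain ⟨m, hm⟩ := Nat.even_mul_succ_self d
  have hlow : m ≤ N := by
    nlinarith [Nat.mul_le_mul hb1 hb1, hq1, hm]
  have hhigh : N ≤ m + d := by
    nlinarith [Nat.mul_le_mul (Nat.add_le_add_right hb2 1) (Nat.add_le_add_right hb2 1), hq2, hm]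
  have hmd : d * (d + 1) / 2 = m := by omega
  simp only [cunpair, ← hq, ← hdd, hmd]
  have hk : N - m ≤ d := by omega
  have hdk : d - (N - m) + (N - m) = d := by omega
  unfold cpair
  rw [hdk]
  omega

/-! ### The monomial basis indexed by position -/

/-- The exponent vector of the monomial at position `k`. -/
noncomputable def bb (k : ℕ) : Fin 2 →₀ ℕ := expv (cunpair k)

lemma expv_zero (a : ℕ × ℕ) : expv a 0 = a.1 := by simp [expv]
lemma expv_one (a : ℕ × ℕ) : expv a 1 = a.2 := by simp [expv]
lemma expv_eta (f : Fin 2 →₀ ℕ) : expv (f 0, f 1) = f := by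
  ext i; fin_cases i <;> simp [expv]
lemma mpos_expv (a : ℕ × ℕ) : mpos (expv a) = cpair a.1 a.2 := by
  simp [mpos, expv_zero, expv_one]
lemma mpos_bb (k : ℕ) : mpos (bb k) = k := by
  rw [bb, mpos_expv, cpair_cunpair]
lemma bb_mpos (f : Fin 2 →₀ ℕ) : bb (mpos f) = f := by
  rw [bb, mpos, cunpair_cpair, expv_eta]
lemma bb_inj : Function.Injective bb := by
  intro a b h
  rw [← mpos_bb a, ← mpos_bb b, h]

/-! ### Integrals of polynomials against monomials -/

lemma integral_ev (P : MvPolynomial (Fin 2) ℝ) (μ : Measure (ℝ × ℝ))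
    (h : ∀ t s : ℕ, Integrable (fun p : ℝ × ℝ => p.1 ^ t * p.2 ^ s) μ) (t s : ℕ) :
    ∫ p : ℝ × ℝ, ev P p * (p.1 ^ t * p.2 ^ s) ∂μ
      = ∑ a ∈ P.support, P.coeff a * mom μ (a 0 + t, a 1 + s) := by
  have key : ∀ p : ℝ × ℝ, ev P p * (p.1 ^ t * p.2 ^ s)
      = ∑ a ∈ P.support, P.coeff a * (p.1 ^ (a 0 + t) * p.2 ^ (a 1 + s)) := by
    intro p
    rw [ev, eval_eq', Finset.sum_mul]
    refine Finset.sum_congr rfl fun a _ => ?_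
    rw [Fin.prod_univ_two]
    simp only [Matrix.cons_val_zero, Matrix.cons_val_one, Matrix.head_cons, pow_add]
    ring
  simp_rw [key]
  rw [integral_finset_sum _ (fun a _ => ((h (a 0 + t) (a 1 + s)).const_mul _))]
  refine Finset.sum_congr rfl fun a _ => ?_
  rw [mom, integral_const_mul]

lemma integral_ev_range (P : MvPolynomial (Fin 2) ℝ) (Mn : ℕ)
    (hP : ∀ a ∈ P.support, mpos a < Mn) (μ : Measure (ℝ × ℝ))
    (h : ∀ t s : ℕ, Integrable (fun p : ℝ × ℝ => p.1 ^ t * p.2 ^ s) μ) (t s : ℕ) :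
    ∫ p : ℝ × ℝ, ev P p * (p.1 ^ t * p.2 ^ s) ∂μ
      = ∑ k ∈ Finset.range Mn, P.coeff (bb k) * mom μ (cunpair k + (t, s)) := by
  rw [integral_ev P μ h t s]
  have hsub : P.support ⊆ (Finset.range Mn).image bb := by
    intro a ha
    exact Finset.mem_image.2 ⟨mpos a, Finset.mem_range.2 (hP a ha), bb_mpos a⟩
  rw [Finset.sum_subset hsub (by
    intro a _ ha
    rw [MvPolynomial.notMem_support_iff.1 ha, zero_mul])]
  rw [Finset.sum_image (fun k _ k' _ hkk => bb_inj hkk)]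
  refine Finset.sum_congr rfl fun k _ => ?_
  congr 1
  have h0 : (bb k) 0 = (cunpair k).1 := by simp [bb, expv]
  have h1 : (bb k) 1 = (cunpair k).2 := by simp [bb, expv]
  rw [h0, h1, Prod.mk_add_mk]

/-! ### Sums of monomials and coefficient extraction -/

lemma coeff_sum_monomial {m : ℕ} (c : Fin m → ℝ) (k : Fin m) :
    MvPolynomial.coeff (bb (k : ℕ))
      (∑ l : Fin m, monomial (bb (l : ℕ)) (c l)) = c k := by
  rw [MvPolynomial.coeff_sum]
  simp only [coeff_monomial, bb_inj.eq_iff, Fin.val_inj]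
  rw [Finset.sum_ite_eq' Finset.univ k c]
  simp

lemma coeff_sum_monomial_ge {m : ℕ} (c : Fin m → ℝ) (a : Fin 2 →₀ ℕ) (ha : m ≤ mpos a) :
    MvPolynomial.coeff a (∑ l : Fin m, monomial (bb (l : ℕ)) (c l)) = 0 := by
  rw [MvPolynomial.coeff_sum]
  refine Finset.sum_eq_zero fun l _ => ?_
  rw [coeff_monomial, if_neg]
  intro hla
  have := congrArg mpos hla
  rw [mpos_bb] at this
  have := l.isLt
  omega

lemma supp_sum_monomial {m : ℕ} (c : Fin m → ℝ) :
    ∀ a ∈ (∑ l : Fin m, monomial (bb (l : ℕ)) (c l)).support, mpos a < m := by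
  intro a ha
  rw [MvPolynomial.mem_support_iff] at ha
  by_contra h
  exact ha (coeff_sum_monomial_ge c a (by omega))

lemma sum_monomial_eq {m : ℕ} (P : MvPolynomial (Fin 2) ℝ)
    (h : ∀ a ∈ P.support, mpos a < m) :
    ∑ l : Fin m, monomial (bb (l : ℕ)) (MvPolynomial.coeff (bb (l : ℕ)) P) = P := by
  refine MvPolynomial.ext _ _ fun a => ?_
  by_cases hma : mpos a < m
  · have : MvPolynomial.coeff a (∑ l : Fin m, monomial (bb (l : ℕ)) (MvPolynomial.coeff (bb (l : ℕ)) P))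
        = MvPolynomial.coeff (bb ((⟨mpos a, hma⟩ : Fin m) : ℕ))
            (∑ l : Fin m, monomial (bb (l : ℕ)) (MvPolynomial.coeff (bb (l : ℕ)) P)) := by
      rw [show (((⟨mpos a, hma⟩ : Fin m) : ℕ)) = mpos a from rfl, bb_mpos]
    rw [this, coeff_sum_monomial]
    rw [show (((⟨mpos a, hma⟩ : Fin m) : ℕ)) = mpos a from rfl, bb_mpos]
  · rw [coeff_sum_monomial_ge _ _ (by omega)]
    by_contra hc
    exact hma (h a (MvPolynomial.mem_support_iff.2 fun h0 => hc h0.symm))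

/-! ### Unique solvability of linear systems -/

lemma euq {α β : Sort*} {p : α → Prop} {q : β → Prop} (f : α → β) (g : β → α)
    (hf : ∀ a, p a → q (f a)) (hg : ∀ b, q b → p (g b))
    (hgf : ∀ a, p a → g (f a) = a) (hfg : ∀ b, q b → f (g b) = b) :
    (∃! a, p a) ↔ (∃! b, q b) := by
  constructor
  · rintro ⟨a, ha, hu⟩
    exact ⟨f a, hf a ha, fun b hb => by rw [← hfg b hb, hu (g b) (hg b hb)]⟩
  · rintro ⟨b, hb, hu⟩
    exact ⟨g b, hg b hb, fun a ha => by rw [← hgf a ha, hu (f a) (hf a ha)]⟩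

lemma eu_vecMul {N : ℕ} (M : Matrix (Fin N) (Fin N) ℝ) (w : Fin N → ℝ) :
    (∃! x : Fin N → ℝ, Matrix.vecMul x M = w) ↔ IsUnit M := by
  constructor
  · rintro ⟨x₀, hx₀, hu⟩
    rw [← Matrix.vecMul_injective_iff_isUnit]
    intro a b hab
    have h1 : Matrix.vecMul (x₀ + (a - b)) M = w := by
      simp only [funext_iff] at hab ⊢
      intro i
      rw [Matrix.add_vecMul, Matrix.sub_vecMul]
      simp only [Pi.add_apply, Pi.sub_apply, hab, ← hx₀]
      ring
    have := hu _ h1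
    have h2 : a - b = 0 := by
      have := congrArg (· - x₀) this
      simpa using this
    linear_combination (norm := abel) h2
  · intro h
    obtain ⟨x, hx⟩ := Matrix.vecMul_surjective_iff_isUnit.2 h w
    exact ⟨x, hx, fun y hy => Matrix.vecMul_injective_iff_isUnit.2 h (hy.trans hx.symm)⟩

lemma eu_mulVec {N : ℕ} (M : Matrix (Fin N) (Fin N) ℝ) (w : Fin N → ℝ) :
    (∃! x : Fin N → ℝ, Matrix.mulVec M x = w) ↔ IsUnit M := by
  constructor
  · rintro ⟨x₀, hx₀, hu⟩
    rw [← Matrix.mulVec_injective_iff_isUnit]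
    intro a b hab
    have h1 : Matrix.mulVec M (x₀ + (a - b)) = w := by
      simp only [funext_iff] at hab ⊢
      intro i
      rw [Matrix.mulVec_add, Matrix.mulVec_sub]
      simp only [Pi.add_apply, Pi.sub_apply, hab, ← hx₀]
      ring
    have := hu _ h1
    have h2 : a - b = 0 := by
      have := congrArg (· - x₀) this
      simpa using this
    linear_combination (norm := abel) h2
  · intro h
    obtain ⟨x, hx⟩ := Matrix.mulVec_surjective_iff_isUnit.2 h w
    exact ⟨x, hx, fun y hy => Matrix.mulVec_injective_iff_isUnit.2 h (hy.trans hx.symm)⟩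


lemma main_aux {r N : ℕ}
    (μ : Fin r → Measure (ℝ × ℝ))
    (hmom : ∀ (j : Fin r) (t s : ℕ), Integrable (fun p : ℝ × ℝ => p.1 ^ t * p.2 ^ s) (μ j))
    (n : Fin r → ℕ) (hN : ∑ j, n j = N) (e : Fin N ≃ (Σ j : Fin r, Fin (n j))) :
    ((∃! A : Fin r → MvPolynomial (Fin 2) ℝ, IsTypeIMeas μ n A) ↔
      (∃! P : MvPolynomial (Fin 2) ℝ, IsTypeIIMeas μ n P)) ∧
    ((∃! P : MvPolynomial (Fin 2) ℝ, IsTypeIIMeas μ n P) ↔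
      IsUnit (Matrix.of fun k l : Fin N =>
        mom (μ (e l).1) (cunpair k.val + cunpair ((e l).2 : ℕ)))) := by
  set Mx : Matrix (Fin N) (Fin N) ℝ := Matrix.of fun k l : Fin N =>
    mom (μ (e l).1) (cunpair k.val + cunpair ((e l).2 : ℕ)) with hMx
  set w : Fin N → ℝ := fun i => -(mom (μ (e i).1) (cunpair N + cunpair ((e i).2 : ℕ))) with hw
  set u : Fin N → ℝ := fun k => if (k : ℕ) + 1 = N then 1 else 0 with hu
  have hvm : ∀ (x : Fin N → ℝ) (i : Fin N),
      Matrix.vecMul x Mx i = ∑ k : Fin N, x k * Mx k i := fun x i => rfl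
  have hmv : ∀ (x : Fin N → ℝ) (k : Fin N),
      Matrix.mulVec Mx x k = ∑ i : Fin N, Mx k i * x i := fun x k => rfl
  ----------------------------------------------------------------
  -- Characterisation of Type II
  ----------------------------------------------------------------
  have hIIiff : ∀ P : MvPolynomial (Fin 2) ℝ, IsTypeIIMeas μ n P ↔
      (MvPolynomial.coeff (bb N) P = 1 ∧ (∀ a ∈ P.support, mpos a ≤ N) ∧
        Matrix.vecMul (fun k : Fin N => MvPolynomial.coeff (bb (k : ℕ)) P) Mx = w) := by
    intro P
    constructor
    · rintro ⟨h1, h2, h3⟩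
      rw [hN] at h1 h2
      have hc1 : MvPolynomial.coeff (bb N) P = 1 := h1
      refine ⟨hc1, h2, ?_⟩
      funext i
      have hint := integral_ev_range P (N + 1) (fun a ha => by have := h2 a ha; omega)
        (μ (e i).1) (hmom (e i).1) (cunpair ((e i).2 : ℕ)).1 (cunpair ((e i).2 : ℕ)).2
      have h0 := h3 (e i).1 (cunpair ((e i).2 : ℕ)).1 (cunpair ((e i).2 : ℕ)).2
        (by rw [cpair_cunpair]; exact (e i).2.isLt)
      rw [hint] at h0
      simp only [Prod.mk.eta] at h0
      rw [Finset.sum_range_succ, ← Fin.sum_univ_eq_sum_range] at h0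
      rw [hvm]
      have hthis : ∑ k : Fin N, MvPolynomial.coeff (bb (k : ℕ)) P * Mx k i
          = ∑ k : Fin N, MvPolynomial.coeff (bb (k : ℕ)) P
              * mom (μ (e i).1) (cunpair (k : ℕ) + cunpair ((e i).2 : ℕ)) := rfl
      rw [hthis]
      rw [hc1, one_mul] at h0
      have hwi : w i = -(mom (μ (e i).1) (cunpair N + cunpair ((e i).2 : ℕ))) := rfl
      rw [hwi]
      linarith [h0]
    · rintro ⟨h1, h2, h3⟩
      refine ⟨?_, ?_, ?_⟩
      · rw [hN]; exact h1
      · rw [hN]; exact h2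
      intro j t s hts
      have htsN : cpair t s < N := by
        have : n j ≤ ∑ j, n j := Finset.single_le_sum (f := n) (fun _ _ => Nat.zero_le _)
          (Finset.mem_univ j)
        omega
      set i := e.symm ⟨j, ⟨cpair t s, hts⟩⟩ with hi
      have hei : e i = ⟨j, ⟨cpair t s, hts⟩⟩ := e.apply_symm_apply _
      have h0 := congrFun h3 i
      rw [hvm] at h0
      have hint := integral_ev_range P (N + 1) (fun a ha => by have := h2 a ha; omega)
        (μ j) (hmom j) t s
      rw [hint, Finset.sum_range_succ, ← Fin.sum_univ_eq_sum_range]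
      have hMxi : ∀ k : Fin N, Mx k i = mom (μ j) (cunpair (k : ℕ) + (t, s)) := by
        intro k
        show mom (μ (e i).1) (cunpair (k : ℕ) + cunpair ((e i).2 : ℕ)) = _
        rw [hei]
        show mom (μ j) (cunpair (k : ℕ) + cunpair (cpair t s)) = _
        rw [cunpair_cpair]
      have hwi : w i = -(mom (μ j) (cunpair N + (t, s))) := by
        show -(mom (μ (e i).1) (cunpair N + cunpair ((e i).2 : ℕ))) = _
        rw [hei]
        show -(mom (μ j) (cunpair N + cunpair (cpair t s))) = _
        rw [cunpair_cpair]
      simp only [hMxi, hwi] at h0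
      rw [h1, one_mul]
      linarith [h0]
  ----------------------------------------------------------------
  -- Characterisation of Type I
  ----------------------------------------------------------------
  have hsum : ∀ (A : Fin r → MvPolynomial (Fin 2) ℝ),
      (∀ j : Fin r, ∀ a ∈ (A j).support, mpos a < n j) → ∀ t s : ℕ,
      ∑ j : Fin r, ∫ p : ℝ × ℝ, ev (A j) p * (p.1 ^ t * p.2 ^ s) ∂(μ j)
        = ∑ i : Fin N, MvPolynomial.coeff (bb (((e i).2 : Fin (n (e i).1)) : ℕ)) (A (e i).1)
            * mom (μ (e i).1) (cunpair (((e i).2 : Fin (n (e i).1)) : ℕ) + (t, s)) := by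
    intro A hs t s
    have hj : ∀ j : Fin r, ∫ p : ℝ × ℝ, ev (A j) p * (p.1 ^ t * p.2 ^ s) ∂(μ j)
        = ∑ l ∈ Finset.range (n j),
            MvPolynomial.coeff (bb l) (A j) * mom (μ j) (cunpair l + (t, s)) :=
      fun j => integral_ev_range (A j) (n j) (hs j) (μ j) (hmom j) t s
    simp_rw [hj]
    rw [show (∑ i : Fin N, MvPolynomial.coeff (bb (((e i).2 : Fin (n (e i).1)) : ℕ)) (A (e i).1)
            * mom (μ (e i).1) (cunpair (((e i).2 : Fin (n (e i).1)) : ℕ) + (t, s)))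
        = ∑ σ : (Σ j : Fin r, Fin (n j)), MvPolynomial.coeff (bb ((σ.2 : Fin (n σ.1)) : ℕ)) (A σ.1)
            * mom (μ σ.1) (cunpair ((σ.2 : Fin (n σ.1)) : ℕ) + (t, s)) from
      Fintype.sum_equiv e _ _ (fun i => rfl)]
    rw [← Finset.univ_sigma_univ, Finset.sum_sigma]
    refine Finset.sum_congr rfl fun j _ => ?_
    rw [← Fin.sum_univ_eq_sum_range]
  have hIiff : ∀ A : Fin r → MvPolynomial (Fin 2) ℝ, IsTypeIMeas μ n A ↔
      ((∀ j : Fin r, ∀ a ∈ (A j).support, mpos a < n j) ∧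
        Matrix.mulVec Mx (fun i : Fin N =>
          MvPolynomial.coeff (bb (((e i).2 : Fin (n (e i).1)) : ℕ)) (A (e i).1)) = u) := by
    intro A
    constructor
    · rintro ⟨h1, h2, h3⟩
      refine ⟨h1, ?_⟩
      funext k
      rw [hmv]
      have hkey : ∑ i : Fin N, Mx k i * MvPolynomial.coeff (bb (((e i).2 : Fin (n (e i).1)) : ℕ)) (A (e i).1)
          = ∑ j : Fin r, ∫ p : ℝ × ℝ, ev (A j) p
              * (p.1 ^ (cunpair (k : ℕ)).1 * p.2 ^ (cunpair (k : ℕ)).2) ∂(μ j) := by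
        rw [hsum A h1]
        refine Finset.sum_congr rfl fun i _ => ?_
        show mom (μ (e i).1) (cunpair (k : ℕ) + cunpair (((e i).2 : Fin (n (e i).1)) : ℕ)) * _ = _
        rw [mul_comm, add_comm, Prod.mk.eta]
      rw [hkey]
      have huk : u k = if (k : ℕ) + 1 = N then 1 else 0 := rfl
      rw [huk]
      by_cases hk : (k : ℕ) + 1 = N
      · rw [if_pos hk]
        exact h3 _ _ (by rw [cpair_cunpair]; omega)
      · rw [if_neg hk]
        exact h2 _ _ (by rw [cpair_cunpair]; have := k.isLt; omega)
    · rintro ⟨h1, h3⟩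
      refine ⟨h1, ?_, ?_⟩
      · intro t s hts
        have htsN : cpair t s < N := by omega
        set k₀ : Fin N := ⟨cpair t s, htsN⟩ with hk₀
        have h0 := congrFun h3 k₀
        rw [hmv] at h0
        rw [hsum A h1 t s]
        have hM0 : ∀ i : Fin N, Mx k₀ i
            = mom (μ (e i).1) (cunpair ((((e i).2 : Fin (n (e i).1))) : ℕ) + (t, s)) := by
          intro i
          show mom (μ (e i).1) (cunpair (cpair t s) + cunpair _) = _
          rw [cunpair_cpair, add_comm]
        have hu0 : u k₀ = 0 := by
          show (if (k₀ : ℕ) + 1 = N then (1:ℝ) else 0) = 0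
          rw [if_neg (by show ¬(cpair t s + 1 = N); omega)]
        simp only [hM0, hu0] at h0
        rw [← h0]
        refine Finset.sum_congr rfl fun i _ => mul_comm _ _
      · intro t s hts
        have htsN : cpair t s < N := by omega
        set k₀ : Fin N := ⟨cpair t s, htsN⟩ with hk₀
        have h0 := congrFun h3 k₀
        rw [hmv] at h0
        rw [hsum A h1 t s]
        have hM0 : ∀ i : Fin N, Mx k₀ i
            = mom (μ (e i).1) (cunpair ((((e i).2 : Fin (n (e i).1))) : ℕ) + (t, s)) := by
          intro i
          show mom (μ (e i).1) (cunpair (cpair t s) + cunpair _) = _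
          rw [cunpair_cpair, add_comm]
        have hu0 : u k₀ = 1 := by
          show (if (k₀ : ℕ) + 1 = N then (1:ℝ) else 0) = 1
          rw [if_pos (by show cpair t s + 1 = N; omega)]
        simp only [hM0, hu0] at h0
        rw [← h0]
        refine Finset.sum_congr rfl fun i _ => mul_comm _ _
  ----------------------------------------------------------------
  -- Transfer to the linear systems and conclude
  ----------------------------------------------------------------
  have hII : (∃! P : MvPolynomial (Fin 2) ℝ, IsTypeIIMeas μ n P) ↔ IsUnit Mx := by
    rw [← eu_vecMul Mx w]
    refine euq (fun P => fun k : Fin N => MvPolynomial.coeff (bb (k : ℕ)) P)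
      (fun x => monomial (bb N) 1 + ∑ k : Fin N, monomial (bb (k : ℕ)) (x k))
      ?_ ?_ ?_ ?_
    · intro P hP
      exact ((hIIiff P).1 hP).2.2
    · intro x hx
      have hcoefflt : ∀ k : Fin N, MvPolynomial.coeff (bb (k : ℕ))
          (monomial (bb N) 1 + ∑ l : Fin N, monomial (bb (l : ℕ)) (x l)) = x k := by
        intro k
        rw [MvPolynomial.coeff_add, coeff_sum_monomial, coeff_monomial, if_neg, zero_add]
        intro hc
        have := congrArg mpos hc
        rw [mpos_bb, mpos_bb] at this
        have := k.isLt
        omega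
      have hcoeffN : MvPolynomial.coeff (bb N)
          (monomial (bb N) 1 + ∑ l : Fin N, monomial (bb (l : ℕ)) (x l)) = 1 := by
        rw [MvPolynomial.coeff_add, coeff_sum_monomial_ge _ _ (by rw [mpos_bb]),
          coeff_monomial, if_pos rfl, add_zero]
      rw [hIIiff]
      refine ⟨hcoeffN, ?_, ?_⟩
      · intro a ha
        rw [MvPolynomial.mem_support_iff] at ha
        by_contra hcon
        apply ha
        rw [MvPolynomial.coeff_add, coeff_sum_monomial_ge _ _ (by omega),
          coeff_monomial, if_neg, add_zero]
        intro hc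
        have := congrArg mpos hc
        rw [mpos_bb] at this
        omega
      · rw [show (fun k : Fin N => MvPolynomial.coeff (bb (k : ℕ))
            (monomial (bb N) 1 + ∑ l : Fin N, monomial (bb (l : ℕ)) (x l))) = x from
          funext hcoefflt]
        exact hx
    · intro P hP
      obtain ⟨h1, h2, _⟩ := (hIIiff P).1 hP
      refine MvPolynomial.ext _ _ fun a => ?_
      show MvPolynomial.coeff a (monomial (bb N) 1
        + ∑ l : Fin N, monomial (bb (l : ℕ)) (MvPolynomial.coeff (bb (l : ℕ)) P))
          = MvPolynomial.coeff a P
      rcases lt_trichotomy (mpos a) N with h | h | h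
      · rw [MvPolynomial.coeff_add, coeff_monomial, if_neg, zero_add]
        · have hcs := coeff_sum_monomial (m := N)
            (fun k : Fin N => MvPolynomial.coeff (bb (k : ℕ)) P) ⟨mpos a, h⟩
          rw [show (((⟨mpos a, h⟩ : Fin N) : ℕ)) = mpos a from rfl, bb_mpos] at hcs
          rw [hcs]
        · intro hc
          have := congrArg mpos hc
          rw [mpos_bb] at this
          omega
      · rw [MvPolynomial.coeff_add, coeff_sum_monomial_ge _ _ (by omega),
          coeff_monomial, add_zero, ← h, bb_mpos, if_pos rfl]
        rw [← h1, ← h, bb_mpos]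
      · rw [MvPolynomial.coeff_add, coeff_sum_monomial_ge _ _ (by omega),
          coeff_monomial, if_neg, add_zero]
        · by_contra hc
          have := h2 a (MvPolynomial.mem_support_iff.2 fun h0 => hc h0.symm)
          omega
        · intro hc
          have := congrArg mpos hc
          rw [mpos_bb] at this
          omega
    · intro x hx
      funext k
      show MvPolynomial.coeff (bb (k : ℕ))
        (monomial (bb N) 1 + ∑ l : Fin N, monomial (bb (l : ℕ)) (x l)) = x k
      rw [MvPolynomial.coeff_add, coeff_sum_monomial, coeff_monomial, if_neg, zero_add]
      intro hc
      have := congrArg mpos hc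
      rw [mpos_bb, mpos_bb] at this
      have := k.isLt
      omega
  have hI : (∃! A : Fin r → MvPolynomial (Fin 2) ℝ, IsTypeIMeas μ n A) ↔ IsUnit Mx := by
    rw [← eu_mulVec Mx u]
    refine euq (fun A => fun i : Fin N =>
        MvPolynomial.coeff (bb (((e i).2 : Fin (n (e i).1)) : ℕ)) (A (e i).1))
      (fun x => fun j => ∑ l : Fin (n j), monomial (bb (l : ℕ)) (x (e.symm ⟨j, l⟩)))
      ?_ ?_ ?_ ?_
    · intro A hA
      exact ((hIiff A).1 hA).2
    · intro x hx
      rw [hIiff]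
      have hc : ∀ (i : Fin N),
          MvPolynomial.coeff (bb (((e i).2 : Fin (n (e i).1)) : ℕ))
            (∑ l : Fin (n (e i).1), monomial (bb (l : ℕ)) (x (e.symm ⟨(e i).1, l⟩))) = x i := by
        intro i
        rw [coeff_sum_monomial (fun l : Fin (n (e i).1) => x (e.symm ⟨(e i).1, l⟩)) (e i).2]
        rw [Sigma.eta, e.symm_apply_apply]
      refine ⟨fun j => supp_sum_monomial _, ?_⟩
      rw [show (fun i : Fin N => MvPolynomial.coeff (bb (((e i).2 : Fin (n (e i).1)) : ℕ))
          (∑ l : Fin (n (e i).1), monomial (bb (l : ℕ)) (x (e.symm ⟨(e i).1, l⟩)))) = x from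
        funext hc]
      exact hx
    · intro A hA
      have h1 := ((hIiff A).1 hA).1
      funext j
      show (∑ l : Fin (n j), monomial (bb (l : ℕ))
          (MvPolynomial.coeff (bb (((e (e.symm ⟨j, l⟩)).2 : Fin (n (e (e.symm ⟨j, l⟩)).1)) : ℕ))
            (A (e (e.symm ⟨j, l⟩)).1))) = A j
      have key : ∀ l : Fin (n j),
          MvPolynomial.coeff (bb (((e (e.symm ⟨j, l⟩)).2 : Fin (n (e (e.symm ⟨j, l⟩)).1)) : ℕ))
            (A (e (e.symm ⟨j, l⟩)).1) = MvPolynomial.coeff (bb (l : ℕ)) (A j) := by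
        intro l
        rw [e.apply_symm_apply]
      simp only [key]
      exact sum_monomial_eq (A j) (h1 j)
    · intro x hx
      funext i
      show MvPolynomial.coeff (bb (((e i).2 : Fin (n (e i).1)) : ℕ))
        (∑ l : Fin (n (e i).1), monomial (bb (l : ℕ)) (x (e.symm ⟨(e i).1, l⟩))) = x i
      rw [coeff_sum_monomial (fun l : Fin (n (e i).1) => x (e.symm ⟨(e i).1, l⟩)) (e i).2]
      rw [Sigma.eta, e.symm_apply_apply]
  exact ⟨hI.trans hII.symm, hII⟩

/-- For a system of bivariate measures `μ₁, …, μ_r` and a multi-index `n`, the following are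
equivalent: existence and uniqueness of the bivariate Type I polynomials `A_{n,1}, …, A_{n,r}`;
existence and uniqueness of the monic bivariate Type II polynomial `P_n`; and invertibility of
the block moment matrix `M_n` (columns identified with pairs `(j, l)` via `e`). -/
theorem typeI_iff_typeII_iff_moment_matrix_isUnit {r : ℕ}
    (μ : Fin r → Measure (ℝ × ℝ))
    (hmom : ∀ (j : Fin r) (t s : ℕ), Integrable (fun p : ℝ × ℝ => p.1 ^ t * p.2 ^ s) (μ j))
    (n : Fin r → ℕ) (e : Fin (∑ j, n j) ≃ (Σ j : Fin r, Fin (n j))) :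
    ((∃! A : Fin r → MvPolynomial (Fin 2) ℝ, IsTypeIMeas μ n A) ↔
      (∃! P : MvPolynomial (Fin 2) ℝ, IsTypeIIMeas μ n P)) ∧
    ((∃! P : MvPolynomial (Fin 2) ℝ, IsTypeIIMeas μ n P) ↔
      IsUnit (Matrix.of fun k l : Fin (∑ j, n j) =>
        mom (μ (e l).1) (cunpair k.val + cunpair ((e l).2 : ℕ)))) :=
  main_aux μ hmom n rfl e
end

section
/- Let μ₁,…,μ_r be bivariate absolutely continuous measures with respect to a common measure μ (dμ_j = w_j dμ), and let n, m be normal multi-indices. If m ≤ n componentwise, then ⟨P_n, Q_m⟩_μ = 0, where P_n is the bivariate Type II MOP for n and Q_m = Σ_j A_{m,j} w_j is the bivariate Type I function for m. -/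
open MeasureTheory MvPolynomial

/-- `P` is the monic bivariate Type II multiple orthogonal polynomial for the multi-index `n`
with respect to the measures `dμ_j = w_j dμ`: its leading monomial is at position `|n|` (monic
there, all other monomials earlier in the graded reverse lexicographic order) and
`⟨P, x^t y^s⟩_j = ∫ P · x^t y^s · w_j dμ = 0` for all `0 ≤ π(t,s) ≤ n_j − 1`. -/
def IsTypeII {r : ℕ} (μ : Measure (ℝ × ℝ)) (w : Fin r → ℝ × ℝ → ℝ) (n : Fin r → ℕ)
    (P : MvPolynomial (Fin 2) ℝ) : Prop :=
  P.coeff (expv (cunpair (∑ j, n j))) = 1 ∧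
  (∀ a ∈ P.support, mpos a ≤ ∑ j, n j) ∧
  ∀ j : Fin r, ∀ t s : ℕ, cpair t s < n j →
    ∫ p : ℝ × ℝ, ev P p * (p.1 ^ t * p.2 ^ s) * w j p ∂μ = 0

/-- `A` is the vector of bivariate Type I multiple orthogonal polynomials for the multi-index
`n` with respect to the measures `dμ_j = w_j dμ`: `π(mdeg A_j) ≤ n_j − 1` and
`Σ_j ⟨A_j, x^t y^s⟩_j` equals `0` for `0 ≤ π(t,s) ≤ |n|−2` and `1` for `π(t,s) = |n|−1`. -/
def IsTypeI {r : ℕ} (μ : Measure (ℝ × ℝ)) (w : Fin r → ℝ × ℝ → ℝ) (n : Fin r → ℕ)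
    (A : Fin r → MvPolynomial (Fin 2) ℝ) : Prop :=
  (∀ j : Fin r, ∀ a ∈ (A j).support, mpos a < n j) ∧
  (∀ t s : ℕ, cpair t s + 2 ≤ ∑ j, n j →
    ∑ j : Fin r, ∫ p : ℝ × ℝ, ev (A j) p * (p.1 ^ t * p.2 ^ s) * w j p ∂μ = 0) ∧
  (∀ t s : ℕ, cpair t s + 1 = ∑ j, n j →
    ∑ j : Fin r, ∫ p : ℝ × ℝ, ev (A j) p * (p.1 ^ t * p.2 ^ s) * w j p ∂μ = 1)

lemma ev_eq_sum (Q : MvPolynomial (Fin 2) ℝ) (p : ℝ × ℝ) :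
    ev Q p = ∑ a ∈ Q.support, Q.coeff a * (p.1 ^ (a 0) * p.2 ^ (a 1)) := by
  simp [ev, MvPolynomial.eval_eq', Fin.prod_univ_two]

/-- Biorthogonality, first case: if `m ≤ n` componentwise, then `⟨P_n, Q_m⟩_μ = 0`, where
`P_n` is the bivariate Type II MOP for `n` and `Q_m = Σ_j A_{m,j} w_j` is the bivariate
Type I function for `m` (with `dμ_j = w_j dμ`). -/
theorem biorthogonality_le {r : ℕ} (μ : Measure (ℝ × ℝ)) (w : Fin r → ℝ × ℝ → ℝ)
    (n m : Fin r → ℕ) (Pn : MvPolynomial (Fin 2) ℝ) (A : Fin r → MvPolynomial (Fin 2) ℝ)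
    (hP : IsTypeII μ w n Pn) (hA : IsTypeI μ w m A)
    (hint : ∀ (j : Fin r) (t s : ℕ),
      Integrable (fun p : ℝ × ℝ => ev Pn p * (p.1 ^ t * p.2 ^ s) * w j p) μ)
    (hle : ∀ j, m j ≤ n j) :
    ∫ p : ℝ × ℝ, ev Pn p * (∑ j : Fin r, ev (A j) p * w j p) ∂μ = 0 := by
  obtain ⟨-, -, hPo⟩ := hP
  obtain ⟨hAdeg, -, -⟩ := hA
  have key : ∀ p : ℝ × ℝ, ev Pn p * (∑ j : Fin r, ev (A j) p * w j p)
      = ∑ j : Fin r, ∑ a ∈ (A j).support,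
          (A j).coeff a * (ev Pn p * (p.1 ^ (a 0) * p.2 ^ (a 1)) * w j p) := by
    intro p
    rw [Finset.mul_sum]
    refine Finset.sum_congr rfl fun j _ => ?_
    rw [ev_eq_sum (A j), Finset.sum_mul, Finset.mul_sum]
    exact Finset.sum_congr rfl fun a _ => by ring
  simp_rw [key]
  rw [integral_finset_sum]
  · refine Finset.sum_eq_zero fun j _ => ?_
    rw [integral_finset_sum _ fun a ha => (hint j (a 0) (a 1)).const_mul _]
    refine Finset.sum_eq_zero fun a ha => ?_
    rw [integral_const_mul, hPo j (a 0) (a 1) (lt_of_lt_of_le (hAdeg j a ha) (hle j)), mul_zero]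
  · intro j _
    exact integrable_finset_sum _ fun a ha => (hint j (a 0) (a 1)).const_mul _
end
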